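/- Let G be a real symmetric n×n matrix (playing the role of YYᵀ) and λ_G := (1ₙᵀG1ₙ − tr(G))/(n(n−1)). Let Ẑ ∈ M_opt satisfy ⟨G − λ_G·E_n, Ẑ⟩ ≥ ⟨G − λ_G·E_n, Z⟩ for all Z ∈ M_opt. Then pγ·w_min²·‖Ẑ − Z*‖₁ ≤ ⟨R, Z* − Ẑ⟩ ≤ ⟨G − Ḡ, Ẑ − Z*⟩ + ⟨B̄ − R, Ẑ − Z*⟩ − (λ_G − λ̄)·⟨E_n − I_n, Ẑ − Z*⟩. -/

import Mathlib

/-!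
Entrywise, `vref` has the sign pattern of `u2` and magnitudes at least `wmin`, while every
entry of a matrix in `Mopt` lies in `[-1, 1]`; hence `R i j * (Z* i j - Ẑ i j)` dominates
`p γ wmin² |Ẑ i j - Z* i j|`, which gives the first inequality. For the second, expanding `B̄`
shows that the right-hand side minus `⟨R, Z* - Ẑ⟩` equals
`⟨G - λ_G E, Ẑ - Z*⟩ + (λ_G - τ̄) tr (Ẑ - Z*)`: the first term is nonnegative by optimality
of `Ẑ`, and the trace vanishes because both matrices have unit diagonal.
-/

open Matrix Finset

noncomputable section

def opNorm {k l : ℕ} (A : Matrix (Fin k) (Fin l) ℝ) : ℝ :=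
  ‖(Matrix.toEuclideanLin A).toContinuousLinearMap‖

def ip {n : ℕ} (A B : Matrix (Fin n) (Fin n) ℝ) : ℝ := Matrix.trace (Aᵀ * B)

def ell1Norm {k l : ℕ} (M : Matrix (Fin k) (Fin l) ℝ) : ℝ := ∑ i, ∑ j, |M i j|

def frobNorm {k l : ℕ} (M : Matrix (Fin k) (Fin l) ℝ) : ℝ :=
  Real.sqrt (∑ i, ∑ j, (M i j) ^ 2)

def euclNorm {k : ℕ} (x : Fin k → ℝ) : ℝ := Real.sqrt (∑ i, x i ^ 2)

def En (n : ℕ) : Matrix (Fin n) (Fin n) ℝ := Matrix.of fun _ _ => 1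

def centering (n : ℕ) : Matrix (Fin n) (Fin n) ℝ := 1 - ((n : ℝ)⁻¹) • En n

def Mopt (n : ℕ) : Set (Matrix (Fin n) (Fin n) ℝ) :=
  {Z | Z.PosSemidef ∧ ∀ i, Z i i = 1}

def MGplus (n : ℕ) : Set (Matrix (Fin n) (Fin n) ℝ) :=
  {Z | Z.PosSemidef ∧ ∀ i, Z i i ≤ 1}

def MoptPlus (n : ℕ) : Set (Matrix (Fin n) (Fin n) ℝ) :=
  {Z | Z.PosSemidef ∧ (∀ i, Z i i = 1) ∧ ip (En n) Z = 0}

def u2 (n n₁ : ℕ) : Fin n → ℝ := fun j => if (j : ℕ) < n₁ then 1 else -1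

def Zstar (n n₁ : ℕ) : Matrix (Fin n) (Fin n) ℝ :=
  Matrix.vecMulVec (u2 n n₁) (u2 n n₁)

def wmin (n n₁ n₂ : ℕ) : ℝ := min ((n₁ : ℝ) / n) ((n₂ : ℝ) / n)

def vref (n n₁ n₂ : ℕ) : Fin n → ℝ :=
  fun j => if (j : ℕ) < n₁ then (n₂ : ℝ) / n else -((n₁ : ℝ) / n)

def Rmat (n n₁ n₂ p : ℕ) (γ : ℝ) : Matrix (Fin n) (Fin n) ℝ :=
  ((p : ℝ) * γ) • Matrix.vecMulVec (vref n n₁ n₂) (vref n n₁ n₂)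

def Dmat (n n₁ : ℕ) (V₁ V₂ : ℝ) : Matrix (Fin n) (Fin n) ℝ :=
  Matrix.diagonal fun j => if (j : ℕ) < n₁ then V₁ else V₂

def Gbar (n n₁ n₂ p : ℕ) (γ V₁ V₂ : ℝ) : Matrix (Fin n) (Fin n) ℝ :=
  centering n * Dmat n n₁ V₁ V₂ * centering n + Rmat n n₁ n₂ p γ

def taubar (n n₁ n₂ p : ℕ) (γ V₁ V₂ : ℝ) : ℝ :=
  Matrix.trace (Gbar n n₁ n₂ p γ V₁ V₂) / n

def lambar (n n₁ n₂ p : ℕ) (γ V₁ V₂ : ℝ) : ℝ :=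
  ((∑ i, ∑ j, Gbar n n₁ n₂ p γ V₁ V₂ i j) - Matrix.trace (Gbar n n₁ n₂ p γ V₁ V₂)) /
    ((n : ℝ) * ((n : ℝ) - 1))

def Bbar (n n₁ n₂ p : ℕ) (γ V₁ V₂ : ℝ) : Matrix (Fin n) (Fin n) ℝ :=
  Gbar n n₁ n₂ p γ V₁ V₂ - lambar n n₁ n₂ p γ V₁ V₂ • (En n - 1) -
    taubar n n₁ n₂ p γ V₁ V₂ • (1 : Matrix (Fin n) (Fin n) ℝ)

def W0 (n n₁ n₂ : ℕ) (V₁ V₂ : ℝ) : Matrix (Fin n) (Fin n) ℝ :=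
  Matrix.diagonal fun j => if (j : ℕ) < n₁ then (V₁ - V₂) * ((n₂ : ℝ) / n)
    else -((V₁ - V₂) * ((n₁ : ℝ) / n))

def blockDiagE (n n₁ : ℕ) : Matrix (Fin n) (Fin n) ℝ :=
  Matrix.of fun i j =>
    if (i : ℕ) < n₁ ∧ (j : ℕ) < n₁ then 1
    else if n₁ ≤ (i : ℕ) ∧ n₁ ≤ (j : ℕ) then -1 else 0

def W2m (n n₁ : ℕ) (V₁ V₂ : ℝ) : Matrix (Fin n) (Fin n) ℝ :=
  ((V₁ - V₂) / n) • blockDiagE n n₁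

def Wbb (n n₁ n₂ : ℕ) (V₁ V₂ : ℝ) : Matrix (Fin n) (Fin n) ℝ :=
  W2m n n₁ V₁ V₂ + ((V₁ - V₂) * ((n₂ : ℝ) / n - (n₁ : ℝ) / n) / n) • En n

theorem Matrix.PosSemidef.two_mul_abs_apply_le {ι : Type*} [Fintype ι] [DecidableEq ι]
    {A : Matrix ι ι ℝ} (hA : A.PosSemidef) (i j : ι) :
    2 * |A i j| ≤ A i i + A j j := by
  obtain ⟨hherm, hquad⟩ := posSemidef_iff_dotProduct_mulVec.mp hA
  have hsymm : A j i = A i j := hherm.apply i j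
  have hform (s : ℝ) : 0 ≤ A i i + s * (A i j + A j i) + s * s * A j j := by
    have := hquad (Pi.single i 1 + Pi.single j s)
    simp [mulVec_add, add_dotProduct, mulVec_single, single_dotProduct] at this
    linarith
  have h₁ := hform 1
  have h₂ := hform (-1)
  have : |A i j| ≤ (A i i + A j j) / 2 := abs_le.mpr ⟨by linarith, by linarith⟩
  linarith

section InnerProduct

variable {n : ℕ}

theorem ip_eq_sum (A B : Matrix (Fin n) (Fin n) ℝ) :
    ip A B = ∑ i, ∑ j, A i j * B i j := by
  simp only [ip, trace, Matrix.diag, mul_apply, transpose_apply]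
  exact Finset.sum_comm

theorem ip_sub_left (A B C : Matrix (Fin n) (Fin n) ℝ) :
    ip (A - B) C = ip A C - ip B C := by
  simp [ip, sub_mul]

theorem ip_sub_right (A B C : Matrix (Fin n) (Fin n) ℝ) :
    ip A (B - C) = ip A B - ip A C := by
  simp [ip, mul_sub]

theorem ip_smul_left (c : ℝ) (A B : Matrix (Fin n) (Fin n) ℝ) :
    ip (c • A) B = c * ip A B := by
  simp [ip]

theorem ip_one_left (A : Matrix (Fin n) (Fin n) ℝ) : ip 1 A = trace A := by
  simp [ip]

end InnerProduct

theorem abs_apply_le_one_of_mem_Mopt {n : ℕ} {Z : Matrix (Fin n) (Fin n) ℝ} (hZ : Z ∈ Mopt n)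
    (i j : Fin n) : |Z i j| ≤ 1 := by
  have := hZ.1.two_mul_abs_apply_le i j
  rw [hZ.2 i, hZ.2 j] at this
  linarith

theorem ip_one_sub_eq_zero_of_mem_Mopt {n : ℕ} {Z W : Matrix (Fin n) (Fin n) ℝ}
    (hZ : Z ∈ Mopt n) (hW : W ∈ Mopt n) : ip 1 (Z - W) = 0 := by
  simp [ip_one_left, trace, hZ.2, hW.2]

theorem Zstar_mem_Mopt (n n₁ : ℕ) : Zstar n n₁ ∈ Mopt n := by
  refine ⟨by simpa [Zstar] using posSemidef_vecMulVec_self_star (u2 n n₁), fun i => ?_⟩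
  by_cases h : (i : ℕ) < n₁ <;> simp [Zstar, vecMulVec_apply, u2, h]

theorem abs_sub_eq_mul_sub_of_mul_self_eq_one {s z : ℝ} (hs : s * s = 1) (hz : |z| ≤ 1) :
    |z - s| = s * (s - z) := by
  rw [abs_le] at hz
  rcases mul_self_eq_one_iff.mp hs with rfl | rfl
  · rw [abs_of_nonpos] <;> linarith
  · rw [abs_of_nonneg] <;> linarith

theorem sq_mul_ell1Norm_sub_vecMulVec_le {n : ℕ} {u v : Fin n → ℝ} {c : ℝ}
    {Z : Matrix (Fin n) (Fin n) ℝ} (hu : ∀ i, u i * u i = 1) (hc : 0 ≤ c)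
    (hv : ∀ i, c ≤ u i * v i) (hZ : ∀ i j, |Z i j| ≤ 1) :
    c ^ 2 * ell1Norm (Z - vecMulVec u u) ≤ ip (vecMulVec v v) (vecMulVec u u - Z) := by
  rw [ell1Norm, ip_eq_sum, mul_sum]
  refine sum_le_sum fun i _ => ?_
  rw [mul_sum]
  refine sum_le_sum fun j _ => ?_
  have hs : (u i * u j) * (u i * u j) = 1 := by linear_combination (u j * u j) * hu i + hu j
  have hc2 : c ^ 2 ≤ (u i * v i) * (u j * v j) :=
    sq c ▸ mul_le_mul (hv i) (hv j) hc (hc.trans (hv i))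
  calc c ^ 2 * |(Z - vecMulVec u u) i j|
      ≤ (u i * v i) * (u j * v j) * |Z i j - u i * u j| := by
        simpa [vecMulVec_apply] using mul_le_mul_of_nonneg_right hc2 (abs_nonneg _)
    _ = v i * v j * (u i * u j - Z i j) := by
        rw [abs_sub_eq_mul_sub_of_mul_self_eq_one hs (hZ i j)]
        linear_combination (v i * v j * (u i * u j - Z i j) * (u j * u j)) * hu i
          + (v i * v j * (u i * u j - Z i j)) * hu j
    _ = vecMulVec v v i j * (vecMulVec u u - Z) i j := by simp [vecMulVec_apply]

theorem u2_mul_self (n n₁ : ℕ) (i : Fin n) : u2 n n₁ i * u2 n n₁ i = 1 := by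
  by_cases h : (i : ℕ) < n₁ <;> simp [u2, h]

theorem wmin_nonneg (n n₁ n₂ : ℕ) : 0 ≤ wmin n n₁ n₂ :=
  le_min (by positivity) (by positivity)

theorem wmin_le_u2_mul_vref (n n₁ n₂ : ℕ) (i : Fin n) :
    wmin n n₁ n₂ ≤ u2 n n₁ i * vref n n₁ n₂ i := by
  by_cases h : (i : ℕ) < n₁
  · simp only [u2, vref, h, if_true, one_mul]
    exact min_le_right _ _
  · simp only [u2, vref, h, if_false, neg_mul_neg, one_mul]
    exact min_le_left _ _

theorem elementary_inequality_general (n n₁ n₂ p : ℕ) (γ V₁ V₂ : ℝ)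
    (hγ : 0 < γ)
    (G : Matrix (Fin n) (Fin n) ℝ)
    (Zhat : Matrix (Fin n) (Fin n) ℝ) (hZhatMem : Zhat ∈ Mopt n)
    (hZhatMax : ∀ Z ∈ Mopt n,
      ip (G - (((∑ i, ∑ j, G i j) - Matrix.trace G) / ((n : ℝ) * ((n : ℝ) - 1))) • En n) Z ≤
      ip (G - (((∑ i, ∑ j, G i j) - Matrix.trace G) / ((n : ℝ) * ((n : ℝ) - 1))) • En n) Zhat) :
    (p : ℝ) * γ * (wmin n n₁ n₂) ^ 2 * ell1Norm (Zhat - Zstar n n₁) ≤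
      ip (Rmat n n₁ n₂ p γ) (Zstar n n₁ - Zhat) ∧
    ip (Rmat n n₁ n₂ p γ) (Zstar n n₁ - Zhat) ≤
      ip (G - Gbar n n₁ n₂ p γ V₁ V₂) (Zhat - Zstar n n₁) +
      ip (Bbar n n₁ n₂ p γ V₁ V₂ - Rmat n n₁ n₂ p γ) (Zhat - Zstar n n₁) -
      ((((∑ i, ∑ j, G i j) - Matrix.trace G) / ((n : ℝ) * ((n : ℝ) - 1))) -
        lambar n n₁ n₂ p γ V₁ V₂) * ip (En n - 1) (Zhat - Zstar n n₁) := by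
  set lamG := ((∑ i, ∑ j, G i j) - Matrix.trace G) / ((n : ℝ) * ((n : ℝ) - 1))
  have hZstar := Zstar_mem_Mopt n n₁
  constructor
  · have h := sq_mul_ell1Norm_sub_vecMulVec_le (u2_mul_self n n₁) (wmin_nonneg n n₁ n₂)
      (wmin_le_u2_mul_vref n n₁ n₂) (abs_apply_le_one_of_mem_Mopt hZhatMem)
    rw [Rmat, ip_smul_left, mul_assoc]
    exact mul_le_mul_of_nonneg_left h (by positivity)
  · have hopt : ip (G - lamG • En n) (Zstar n n₁) ≤ ip (G - lamG • En n) Zhat :=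
      hZhatMax _ hZstar
    have htrace := ip_one_sub_eq_zero_of_mem_Mopt hZhatMem hZstar
    simp only [Bbar, ip_sub_left, ip_sub_right, ip_smul_left] at hopt htrace ⊢
    linear_combination hopt + (taubar n n₁ n₂ p γ V₁ V₂ - lamG) * htrace

/-- the elementary inequality for any SDP1 maximizer `Ẑ ∈ M_opt`. -/
theorem elementary_inequality (n n₁ n₂ p : ℕ) (γ V₁ V₂ : ℝ)
    (hn : n = n₁ + n₂) (hn₁ : 0 < n₁) (hn₂ : 0 < n₂) (hp : 1 ≤ p) (hγ : 0 < γ)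
    (hn2 : 2 ≤ n)
    (G : Matrix (Fin n) (Fin n) ℝ) (hG : Gᵀ = G)
    (Zhat : Matrix (Fin n) (Fin n) ℝ) (hZhatMem : Zhat ∈ Mopt n)
    (hZhatMax : ∀ Z ∈ Mopt n,
      ip (G - (((∑ i, ∑ j, G i j) - Matrix.trace G) / ((n : ℝ) * ((n : ℝ) - 1))) • En n) Z ≤
      ip (G - (((∑ i, ∑ j, G i j) - Matrix.trace G) / ((n : ℝ) * ((n : ℝ) - 1))) • En n) Zhat) :
    (p : ℝ) * γ * (wmin n n₁ n₂) ^ 2 * ell1Norm (Zhat - Zstar n n₁) ≤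
      ip (Rmat n n₁ n₂ p γ) (Zstar n n₁ - Zhat) ∧
    ip (Rmat n n₁ n₂ p γ) (Zstar n n₁ - Zhat) ≤
      ip (G - Gbar n n₁ n₂ p γ V₁ V₂) (Zhat - Zstar n n₁) +
      ip (Bbar n n₁ n₂ p γ V₁ V₂ - Rmat n n₁ n₂ p γ) (Zhat - Zstar n n₁) -
      ((((∑ i, ∑ j, G i j) - Matrix.trace G) / ((n : ℝ) * ((n : ℝ) - 1))) -
        lambar n n₁ n₂ p γ V₁ V₂) * ip (En n - 1) (Zhat - Zstar n n₁) :=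
  elementary_inequality_general n n₁ n₂ p γ V₁ V₂ hγ G Zhat hZhatMem hZhatMax
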